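/- Let M, N be even, let U be a unitary on ℂ^M with Uᵀ = -U and V a unitary on ℂ^N with Vᵀ = -V, and for reals α, β, γ, δ define the map Λ(ρ) := Tr(ρ)·𝟙_{MN} + α·ρ + β·(U ⊗ 𝟙_N)·ρ^{T_A}·(U ⊗ 𝟙_N)† + γ·(𝟙_M ⊗ V)·ρ^{T_B}·(𝟙_M ⊗ V)† + δ·(U ⊗ V)·ρᵀ·(U ⊗ V)† on matrices on ℂ^M ⊗ ℂ^N. Assume that Λ(ρ) is separable for every positive semidefinite ρ. Then for all positive semidefinite matrices P and Q on ℂ^M ⊗ ℂ^N, the matrix Λ(P + Q^{T_A}) is separable. -/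

import Mathlib

open Matrix Kronecker
open scoped ComplexOrder

noncomputable section

/-- A Hermitian matrix on ℂ^M ⊗ ℂ^N is separable if it is a finite sum of Kronecker
products of positive semidefinite matrices. -/
def IsSeparableMat {M N : ℕ} (σ : Matrix (Fin M × Fin N) (Fin M × Fin N) ℂ) : Prop :=
  ∃ (k : ℕ) (A : Fin k → Matrix (Fin M) (Fin M) ℂ) (B : Fin k → Matrix (Fin N) (Fin N) ℂ),
    (∀ i, (A i).PosSemidef) ∧ (∀ i, (B i).PosSemidef) ∧ σ = ∑ i, A i ⊗ₖ B i

/-- Partial transpose on the first (Alice) factor. -/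
def ptA {M N : ℕ} (ρ : Matrix (Fin M × Fin N) (Fin M × Fin N) ℂ) :
    Matrix (Fin M × Fin N) (Fin M × Fin N) ℂ :=
  fun p q => ρ (q.1, p.2) (p.1, q.2)

/-- Partial transpose on the second (Bob) factor. -/
def ptB {M N : ℕ} (ρ : Matrix (Fin M × Fin N) (Fin M × Fin N) ℂ) :
    Matrix (Fin M × Fin N) (Fin M × Fin N) ℂ :=
  fun p q => ρ (p.1, q.2) (q.1, p.2)

/-- The second Pauli matrix σ₂. -/
def pauli2 : Matrix (Fin 2) (Fin 2) ℂ := !![0, -Complex.I; Complex.I, 0]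

/-- ρ̃_A = (σ₂ ⊗ 𝟙_N) ρ^{T_A} (σ₂ ⊗ 𝟙_N). -/
def tildeA {N : ℕ} (ρ : Matrix (Fin 2 × Fin N) (Fin 2 × Fin N) ℂ) :
    Matrix (Fin 2 × Fin N) (Fin 2 × Fin N) ℂ :=
  (pauli2 ⊗ₖ (1 : Matrix (Fin N) (Fin N) ℂ)) * ptA ρ *
    (pauli2 ⊗ₖ (1 : Matrix (Fin N) (Fin N) ℂ))

end

/-!
Write `Λ` in terms of the flips `θ_A ρ = (U ⊗ 𝟙) ρ^{T_A} (U ⊗ 𝟙)†` and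
`θ_B ρ = (𝟙 ⊗ V) ρ^{T_B} (𝟙 ⊗ V)†`, whose composite is `ρ ↦ (U ⊗ V) ρᵀ (U ⊗ V)†`.
Because `Uᵀ = -U`, the flip `θ_A` is a trace-preserving involution fixing `𝟙`, and it commutes
with `θ_B`; hence `Λ ∘ θ_A = θ_A ∘ Λ`. Now `Q^{T_A} = θ_A ((U ⊗ 𝟙) Q (U ⊗ 𝟙)†)` with a positive
semidefinite argument, and `θ_A` preserves separability, so `Λ (Q^{T_A})` is separable; `Λ` is
additive, which finishes the proof.
-/

local notation "Mat[" M ", " N "]" => Matrix (Fin M × Fin N) (Fin M × Fin N) ℂ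

namespace Matrix

theorem neg_kronecker {l m n p : Type*} {α : Type*} [Ring α] (A : Matrix l m α)
    (B : Matrix n p α) : (-A) ⊗ₖ B = -(A ⊗ₖ B) := by
  ext
  simp [kroneckerMap_apply]

theorem conjTranspose_transpose_of_transpose_eq_neg {n : Type*} {U : Matrix n n ℂ}
    (hUT : Uᵀ = -U) : Uᴴᵀ = -Uᴴ := by
  rw [← conjTranspose_transpose_eq_transpose_conjTranspose, hUT, conjTranspose_neg]

end Matrix

section PartialTranspose

variable {M N : ℕ}

theorem ptA_mul_kronecker (A C : Matrix (Fin M) (Fin M) ℂ) (B D : Matrix (Fin N) (Fin N) ℂ)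
    (ρ : Mat[M, N]) :
    ptA ((A ⊗ₖ B) * ρ * (C ⊗ₖ D)) = (Cᵀ ⊗ₖ B) * ptA ρ * (Aᵀ ⊗ₖ D) := by
  ext ⟨i, j⟩ ⟨k, l⟩
  simp only [ptA, mul_apply, kroneckerMap_apply, transpose_apply, Finset.sum_mul]
  rw [← Fintype.sum_prod_type', ← Fintype.sum_prod_type']
  exact Fintype.sum_equiv ⟨fun p => ((p.2.1, p.1.2), (p.1.1, p.2.2)),
    fun p => ((p.2.1, p.1.2), (p.1.1, p.2.2)), fun _ => rfl, fun _ => rfl⟩ _ _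
    fun p => by simp only [Equiv.coe_fn_mk]; ring

theorem ptB_mul_kronecker (A C : Matrix (Fin M) (Fin M) ℂ) (B D : Matrix (Fin N) (Fin N) ℂ)
    (ρ : Mat[M, N]) :
    ptB ((A ⊗ₖ B) * ρ * (C ⊗ₖ D)) = (A ⊗ₖ Dᵀ) * ptB ρ * (C ⊗ₖ Bᵀ) := by
  ext ⟨i, j⟩ ⟨k, l⟩
  simp only [ptB, mul_apply, kroneckerMap_apply, transpose_apply, Finset.sum_mul]
  rw [← Fintype.sum_prod_type', ← Fintype.sum_prod_type']
  exact Fintype.sum_equiv ⟨fun p => ((p.1.1, p.2.2), (p.2.1, p.1.2)),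
    fun p => ((p.1.1, p.2.2), (p.2.1, p.1.2)), fun _ => rfl, fun _ => rfl⟩ _ _
    fun p => by simp only [Equiv.coe_fn_mk]; ring

theorem ptA_ptA (ρ : Mat[M, N]) : ptA (ptA ρ) = ρ := rfl

theorem ptA_ptB (ρ : Mat[M, N]) : ptA (ptB ρ) = ρᵀ := rfl

theorem ptB_ptA (ρ : Mat[M, N]) : ptB (ptA ρ) = ρᵀ := rfl

theorem ptA_add (ρ τ : Mat[M, N]) : ptA (ρ + τ) = ptA ρ + ptA τ := rfl

theorem ptB_add (ρ τ : Mat[M, N]) : ptB (ρ + τ) = ptB ρ + ptB τ := rfl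

theorem ptA_smul (c : ℂ) (ρ : Mat[M, N]) : ptA (c • ρ) = c • ptA ρ := rfl

theorem ptA_one : ptA (1 : Mat[M, N]) = 1 := by
  ext ⟨i, j⟩ ⟨k, l⟩
  by_cases hik : i = k <;> by_cases hjl : j = l <;>
    simp [ptA, one_apply, hik, hjl, eq_comm]

theorem trace_ptA (ρ : Mat[M, N]) : (ptA ρ).trace = ρ.trace := rfl

theorem ptA_kronecker (A : Matrix (Fin M) (Fin M) ℂ) (B : Matrix (Fin N) (Fin N) ℂ) :
    ptA (A ⊗ₖ B) = Aᵀ ⊗ₖ B := rfl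

theorem ptA_sum {k : ℕ} (ρ : Fin k → Mat[M, N]) : ptA (∑ i, ρ i) = ∑ i, ptA (ρ i) := by
  ext
  simp [ptA, Matrix.sum_apply]

end PartialTranspose

section Separable

variable {M N : ℕ}

theorem IsSeparableMat.add {σ τ : Mat[M, N]} (hσ : IsSeparableMat σ) (hτ : IsSeparableMat τ) :
    IsSeparableMat (σ + τ) := by
  obtain ⟨k, A, B, hA, hB, rfl⟩ := hσ
  obtain ⟨l, C, D, hC, hD, rfl⟩ := hτ
  refine ⟨k + l, Fin.append A C, Fin.append B D, Fin.addCases ?_ ?_, Fin.addCases ?_ ?_, ?_⟩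
  all_goals simp_all [Fin.sum_univ_add]

theorem IsSeparableMat.ptA {σ : Mat[M, N]} (hσ : IsSeparableMat σ) :
    IsSeparableMat (ptA σ) := by
  obtain ⟨k, A, B, hA, hB, rfl⟩ := hσ
  exact ⟨k, fun i => (A i)ᵀ, B, fun i => (hA i).transpose, hB, by simp [ptA_sum, ptA_kronecker]⟩

theorem IsSeparableMat.kronecker_mul_mul_conjTranspose {σ : Mat[M, N]} (hσ : IsSeparableMat σ)
    (X : Matrix (Fin M) (Fin M) ℂ) (Y : Matrix (Fin N) (Fin N) ℂ) :
    IsSeparableMat ((X ⊗ₖ Y) * σ * (X ⊗ₖ Y)ᴴ) := by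
  obtain ⟨k, A, B, hA, hB, rfl⟩ := hσ
  refine ⟨k, fun i => X * A i * Xᴴ, fun i => Y * B i * Yᴴ,
    fun i => (hA i).mul_mul_conjTranspose_same X,
    fun i => (hB i).mul_mul_conjTranspose_same Y, ?_⟩
  simp only [conjTranspose_kronecker, Finset.mul_sum, Finset.sum_mul, mul_kronecker_mul]

end Separable

section Flip

variable {M N : ℕ}

def flipA (U : Matrix (Fin M) (Fin M) ℂ) (ρ : Mat[M, N]) : Mat[M, N] :=
  (U ⊗ₖ (1 : Matrix (Fin N) (Fin N) ℂ)) * ptA ρ * (U ⊗ₖ (1 : Matrix (Fin N) (Fin N) ℂ))ᴴ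

def flipB (V : Matrix (Fin N) (Fin N) ℂ) (ρ : Mat[M, N]) : Mat[M, N] :=
  ((1 : Matrix (Fin M) (Fin M) ℂ) ⊗ₖ V) * ptB ρ * ((1 : Matrix (Fin M) (Fin M) ℂ) ⊗ₖ V)ᴴ

theorem IsSeparableMat.flipA {σ : Mat[M, N]} (hσ : IsSeparableMat σ)
    (U : Matrix (Fin M) (Fin M) ℂ) : IsSeparableMat (flipA U σ) :=
  hσ.ptA.kronecker_mul_mul_conjTranspose U 1

theorem flipA_add (U : Matrix (Fin M) (Fin M) ℂ) (ρ τ : Mat[M, N]) :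
    flipA U (ρ + τ) = flipA U ρ + flipA U τ := by
  simp only [flipA, ptA_add, Matrix.mul_add, Matrix.add_mul]

theorem flipB_add (V : Matrix (Fin N) (Fin N) ℂ) (ρ τ : Mat[M, N]) :
    flipB V (ρ + τ) = flipB V ρ + flipB V τ := by
  simp only [flipB, ptB_add, Matrix.mul_add, Matrix.add_mul]

theorem flipA_smul (U : Matrix (Fin M) (Fin M) ℂ) (c : ℂ) (ρ : Mat[M, N]) :
    flipA U (c • ρ) = c • flipA U ρ := by
  simp only [flipA, ptA_smul, Matrix.mul_smul, Matrix.smul_mul]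

theorem flipA_flipB (U : Matrix (Fin M) (Fin M) ℂ) (V : Matrix (Fin N) (Fin N) ℂ)
    (ρ : Mat[M, N]) : flipA U (flipB V ρ) = (U ⊗ₖ V) * ρᵀ * (U ⊗ₖ V)ᴴ := by
  simp only [flipA, flipB, conjTranspose_kronecker, conjTranspose_one, ptA_mul_kronecker,
    transpose_one, ptA_ptB, ← Matrix.mul_assoc, ← mul_kronecker_mul]
  simp only [Matrix.mul_assoc, ← mul_kronecker_mul, Matrix.mul_one, Matrix.one_mul]

theorem flipB_flipA (U : Matrix (Fin M) (Fin M) ℂ) (V : Matrix (Fin N) (Fin N) ℂ)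
    (ρ : Mat[M, N]) : flipB V (flipA U ρ) = flipA U (flipB V ρ) := by
  rw [flipA_flipB]
  simp only [flipA, flipB, conjTranspose_kronecker, conjTranspose_one, ptB_mul_kronecker,
    transpose_one, ptB_ptA, ← Matrix.mul_assoc, ← mul_kronecker_mul]
  simp only [Matrix.mul_assoc, ← mul_kronecker_mul, Matrix.mul_one, Matrix.one_mul]

theorem flipA_one {U : Matrix (Fin M) (Fin M) ℂ} (hUU : Uᴴ * U = 1) :
    flipA U (1 : Mat[M, N]) = 1 := by
  rw [flipA, ptA_one, Matrix.mul_one, conjTranspose_kronecker, conjTranspose_one,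
    ← mul_kronecker_mul, mul_eq_one_comm.mp hUU, Matrix.one_mul, one_kronecker_one]

theorem trace_flipA {U : Matrix (Fin M) (Fin M) ℂ} (hUU : Uᴴ * U = 1) (ρ : Mat[M, N]) :
    (flipA U ρ).trace = ρ.trace := by
  rw [flipA, trace_mul_cycle, conjTranspose_kronecker, conjTranspose_one, ← mul_kronecker_mul,
    hUU, Matrix.mul_one, one_kronecker_one, Matrix.one_mul, trace_ptA]

theorem flipA_flipA {U : Matrix (Fin M) (Fin M) ℂ} (hUU : Uᴴ * U = 1) (hUT : Uᵀ = -U)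
    (ρ : Mat[M, N]) : flipA U (flipA U ρ) = ρ := by
  simp only [flipA, conjTranspose_kronecker, conjTranspose_one, ptA_mul_kronecker, ptA_ptA,
    conjTranspose_transpose_of_transpose_eq_neg hUT, hUT, neg_kronecker, Matrix.neg_mul,
    Matrix.mul_neg, neg_neg, ← Matrix.mul_assoc, ← mul_kronecker_mul, mul_eq_one_comm.mp hUU]
  simp only [Matrix.mul_assoc, ← mul_kronecker_mul, mul_eq_one_comm.mp hUU, Matrix.mul_one,
    Matrix.one_mul, one_kronecker_one]

def flipMap (U : Matrix (Fin M) (Fin M) ℂ) (V : Matrix (Fin N) (Fin N) ℂ) (α β γ δ : ℝ)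
    (ρ : Mat[M, N]) : Mat[M, N] :=
  ρ.trace • 1 + (α : ℂ) • ρ + (β : ℂ) • flipA U ρ + (γ : ℂ) • flipB V ρ
    + (δ : ℂ) • flipA U (flipB V ρ)

theorem flipMap_add (U : Matrix (Fin M) (Fin M) ℂ) (V : Matrix (Fin N) (Fin N) ℂ)
    (α β γ δ : ℝ) (ρ τ : Mat[M, N]) :
    flipMap U V α β γ δ (ρ + τ) = flipMap U V α β γ δ ρ + flipMap U V α β γ δ τ := by
  simp only [flipMap, trace_add, flipA_add, flipB_add, add_smul, smul_add]
  abel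

theorem flipMap_flipA {U : Matrix (Fin M) (Fin M) ℂ} (hUU : Uᴴ * U = 1) (hUT : Uᵀ = -U)
    (V : Matrix (Fin N) (Fin N) ℂ) (α β γ δ : ℝ) (ρ : Mat[M, N]) :
    flipMap U V α β γ δ (flipA U ρ) = flipA U (flipMap U V α β γ δ ρ) := by
  simp only [flipMap, flipA_add, flipA_smul, flipA_one hUU, trace_flipA hUU,
    flipA_flipA hUU hUT, flipB_flipA]

end Flip

theorem stmt15_general {M N : ℕ}
    (U : Matrix (Fin M) (Fin M) ℂ) (hUU : Uᴴ * U = 1) (hUT : Uᵀ = -U)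
    (V : Matrix (Fin N) (Fin N) ℂ)
    (α β γ δ : ℝ)
    (Λ : Matrix (Fin M × Fin N) (Fin M × Fin N) ℂ →
          Matrix (Fin M × Fin N) (Fin M × Fin N) ℂ)
    (hΛ : ∀ ρ, Λ ρ = ρ.trace • (1 : Matrix (Fin M × Fin N) (Fin M × Fin N) ℂ)
        + (α : ℂ) • ρ
        + (β : ℂ) • ((U ⊗ₖ (1 : Matrix (Fin N) (Fin N) ℂ)) * ptA ρ *
            (U ⊗ₖ (1 : Matrix (Fin N) (Fin N) ℂ))ᴴ)
        + (γ : ℂ) • (((1 : Matrix (Fin M) (Fin M) ℂ) ⊗ₖ V) * ptB ρ *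
            ((1 : Matrix (Fin M) (Fin M) ℂ) ⊗ₖ V)ᴴ)
        + (δ : ℂ) • ((U ⊗ₖ V) * ρᵀ * (U ⊗ₖ V)ᴴ))
    (hsep : ∀ ρ : Matrix (Fin M × Fin N) (Fin M × Fin N) ℂ,
      ρ.PosSemidef → IsSeparableMat (Λ ρ))
    (P Q : Matrix (Fin M × Fin N) (Fin M × Fin N) ℂ)
    (hP : P.PosSemidef) (hQ : Q.PosSemidef) :
    IsSeparableMat (Λ (P + ptA Q)) := by
  obtain rfl : Λ = flipMap U V α β γ δ := funext fun ρ => by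
    rw [hΛ, flipMap, flipA_flipB, flipA, flipB]
  set W := U ⊗ₖ (1 : Matrix (Fin N) (Fin N) ℂ)
  have hptA : ptA Q = flipA U (W * Q * Wᴴ) := by
    rw [← flipA_flipA hUU hUT (ptA Q)]
    rfl
  rw [flipMap_add, hptA, flipMap_flipA hUU hUT]
  exact (hsep P hP).add ((hsep _ (hQ.mul_mul_conjTranspose_same W)).flipA U)

theorem stmt15 {M N : ℕ} (hM : Even M) (hN : Even N)
    (U : Matrix (Fin M) (Fin M) ℂ) (hUU : Uᴴ * U = 1) (hUT : Uᵀ = -U)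
    (V : Matrix (Fin N) (Fin N) ℂ) (hVV : Vᴴ * V = 1) (hVT : Vᵀ = -V)
    (α β γ δ : ℝ)
    (Λ : Matrix (Fin M × Fin N) (Fin M × Fin N) ℂ →
          Matrix (Fin M × Fin N) (Fin M × Fin N) ℂ)
    (hΛ : ∀ ρ, Λ ρ = ρ.trace • (1 : Matrix (Fin M × Fin N) (Fin M × Fin N) ℂ)
        + (α : ℂ) • ρ
        + (β : ℂ) • ((U ⊗ₖ (1 : Matrix (Fin N) (Fin N) ℂ)) * ptA ρ *
            (U ⊗ₖ (1 : Matrix (Fin N) (Fin N) ℂ))ᴴ)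
        + (γ : ℂ) • (((1 : Matrix (Fin M) (Fin M) ℂ) ⊗ₖ V) * ptB ρ *
            ((1 : Matrix (Fin M) (Fin M) ℂ) ⊗ₖ V)ᴴ)
        + (δ : ℂ) • ((U ⊗ₖ V) * ρᵀ * (U ⊗ₖ V)ᴴ))
    (hsep : ∀ ρ : Matrix (Fin M × Fin N) (Fin M × Fin N) ℂ,
      ρ.PosSemidef → IsSeparableMat (Λ ρ))
    (P Q : Matrix (Fin M × Fin N) (Fin M × Fin N) ℂ)
    (hP : P.PosSemidef) (hQ : Q.PosSemidef) :
    IsSeparableMat (Λ (P + ptA Q)) :=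
  stmt15_general U hUU hUT V α β γ δ Λ hΛ hsep P Q hP hQ
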